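/- Extend KD45 by assuming that for some formula φ the contradiction φ ∧ ¬φ admits a Löb sentence, i.e., there is a formula ψ with ⊢ ψ ↔ (Bψ → (φ ∧ ¬φ)). Then the extended system proves both B(φ ∧ ¬φ) and ¬B(φ ∧ ¬φ), hence every formula. -/

import Mathlib

/-- Formulas of the monomodal language: propositional letters, ⊥, →, and B. -/
inductive Formula : Type
  | atom : Nat → Formula
  | falsum : Formula
  | imp : Formula → Formula → Formula
  | bel : Formula → Formula

namespace Formula

/-- ¬φ := φ → ⊥ -/
def neg (φ : Formula) : Formula := imp φ falsum
/-- φ ∧ ψ := ¬(φ → ¬ψ) -/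
def conj (φ ψ : Formula) : Formula := neg (imp φ (neg ψ))
/-- φ ∨ ψ := ¬φ → ψ -/
def disj (φ ψ : Formula) : Formula := imp (neg φ) ψ
/-- φ ↔ ψ := (φ → ψ) ∧ (ψ → φ) -/
def biimp (φ ψ : Formula) : Formula := conj (imp φ ψ) (imp ψ φ)
/-- ◇_Bφ := ¬B¬φ -/
def dia (φ : Formula) : Formula := neg (bel (neg φ))

/-- φ is a propositional tautology: it is true under every assignment of
truth values to formulas that respects → and ⊥ (so atoms and beled
formulas are treated as opaque propositional units). -/
def Taut (φ : Formula) : Prop :=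
  ∀ v : Formula → Prop,
    (∀ ψ χ, v (imp ψ χ) ↔ (v ψ → v χ)) → ¬ v falsum → v φ

end Formula

open Formula

/-- Derivability in KD45 (for the belief operator B) extended by an
additional set `Ax` of axioms. -/
inductive KD45Ext (Ax : Formula → Prop) : Formula → Prop
  | extra {φ} : Ax φ → KD45Ext Ax φ
  | taut {φ} : Taut φ → KD45Ext Ax φ
  | dist (φ ψ) : KD45Ext Ax (imp (bel (imp φ ψ)) (imp (bel φ) (bel ψ)))
  | axD (φ) : KD45Ext Ax (imp (bel φ) (neg (bel (neg φ))))
  | ax4 (φ) : KD45Ext Ax (imp (bel φ) (bel (bel φ)))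
  | ax5 (φ) : KD45Ext Ax (imp (neg (bel φ)) (bel (neg (bel φ))))
  | mp {φ ψ} : KD45Ext Ax (imp φ ψ) → KD45Ext Ax φ → KD45Ext Ax ψ
  | nec {φ} : KD45Ext Ax φ → KD45Ext Ax (bel φ)

/-!
A Löb sentence ψ ↔ (Bψ → χ) for a refutable χ is paradoxical in KD45. Necessitating
ψ → (Bψ → χ) and using K and 4 gives Bψ → Bχ, while D turns ⊢ ¬χ into ⊢ ¬Bχ; hence ⊢ ¬Bψ.
But then Bψ → χ holds vacuously, so ⊢ ψ and by necessitation ⊢ Bψ.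
-/

namespace Formula

section Valuation

variable {v : Formula → Prop}

theorem val_neg (hv : ∀ ψ χ, v (imp ψ χ) ↔ (v ψ → v χ)) (hf : ¬ v falsum) {φ : Formula} :
    v (neg φ) ↔ ¬ v φ := by
  simp only [neg, hv, hf, imp_false]

theorem val_conj (hv : ∀ ψ χ, v (imp ψ χ) ↔ (v ψ → v χ)) (hf : ¬ v falsum) {φ ψ : Formula} :
    v (conj φ ψ) ↔ v φ ∧ v ψ := by
  simp only [conj, val_neg hv hf, hv, Classical.not_imp, not_not]

theorem val_biimp (hv : ∀ ψ χ, v (imp ψ χ) ↔ (v ψ → v χ)) (hf : ¬ v falsum) {φ ψ : Formula} :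
    v (biimp φ ψ) ↔ (v φ ↔ v ψ) := by
  simp only [biimp, val_conj hv hf, hv, iff_iff_implies_and_implies]

end Valuation

theorem taut_neg_conj_neg (φ : Formula) : Taut (neg (conj φ (neg φ))) := fun v hv hf => by
  simp only [val_neg hv hf, val_conj hv hf]
  tauto

end Formula

namespace KD45Ext

variable {Ax : Formula → Prop} {φ ψ χ : Formula}

theorem mp_taut (h : Taut (imp φ ψ)) (hφ : KD45Ext Ax φ) : KD45Ext Ax ψ :=
  mp (taut h) hφ

theorem mp_taut₂ (h : Taut (imp φ (imp ψ χ))) (hφ : KD45Ext Ax φ) (hψ : KD45Ext Ax ψ) :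
    KD45Ext Ax χ :=
  mp (mp (taut h) hφ) hψ

theorem imp_trans (hφψ : KD45Ext Ax (imp φ ψ)) (hψχ : KD45Ext Ax (imp ψ χ)) :
    KD45Ext Ax (imp φ χ) :=
  mp_taut₂ (fun _ hv _ => by simp only [hv]; tauto) hφψ hψχ

theorem imp_imp_mp (hφψχ : KD45Ext Ax (imp φ (imp ψ χ))) (hφψ : KD45Ext Ax (imp φ ψ)) :
    KD45Ext Ax (imp φ χ) :=
  mp_taut₂ (fun _ hv _ => by simp only [hv]; tauto) hφψχ hφψ

theorem not_bel_of_neg (h : KD45Ext Ax (neg φ)) : KD45Ext Ax (neg (bel φ)) :=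
  mp_taut₂ (fun _ hv hf => by simp only [hv, val_neg hv hf]; tauto) (axD φ) (nec h)

theorem bel_imp_bel_of_imp_bel_imp (h : KD45Ext Ax (imp ψ (imp (bel ψ) χ))) :
    KD45Ext Ax (imp (bel ψ) (bel χ)) :=
  imp_imp_mp (imp_trans (mp (dist _ _) (nec h)) (dist _ _)) (ax4 ψ)

theorem inconsistent_of_lob_sentence (hlob : KD45Ext Ax (biimp ψ (imp (bel ψ) χ)))
    (hχ : KD45Ext Ax (neg χ)) {ρ : Formula} : KD45Ext Ax ρ := by
  have hψχ : KD45Ext Ax (imp ψ (imp (bel ψ) χ)) :=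
    mp_taut (fun _ hv hf => by simp only [hv, val_biimp hv hf]; tauto) hlob
  have hnBψ : KD45Ext Ax (neg (bel ψ)) :=
    mp_taut₂ (fun _ hv hf => by simp only [hv, val_neg hv hf]; tauto)
      (bel_imp_bel_of_imp_bel_imp hψχ) (not_bel_of_neg hχ)
  have hψ : KD45Ext Ax ψ :=
    mp_taut₂ (fun _ hv hf => by simp only [hv, val_biimp hv hf, val_neg hv hf]; tauto) hlob hnBψ
  exact mp_taut₂ (fun _ hv hf => by simp only [hv, val_neg hv hf]; tauto) (nec hψ) hnBψ

end KD45Ext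

/-- extending KD45 by a Löb sentence ψ ↔ (Bψ → (φ ∧ ¬φ))
for the contradiction φ ∧ ¬φ yields both B(φ ∧ ¬φ) and ¬B(φ ∧ ¬φ),
hence every formula. -/
theorem KD45_lob_sentence_crash (φ ψ : Formula) :
    KD45Ext (fun θ => θ = biimp ψ (imp (bel ψ) (conj φ (neg φ))))
      (bel (conj φ (neg φ))) ∧
    KD45Ext (fun θ => θ = biimp ψ (imp (bel ψ) (conj φ (neg φ))))
      (neg (bel (conj φ (neg φ)))) ∧
    ∀ ρ, KD45Ext (fun θ => θ = biimp ψ (imp (bel ψ) (conj φ (neg φ)))) ρ := by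
  have explosion : ∀ ρ, KD45Ext (fun θ => θ = biimp ψ (imp (bel ψ) (conj φ (neg φ)))) ρ :=
    fun _ => KD45Ext.inconsistent_of_lob_sentence (KD45Ext.extra (by rfl))
      (KD45Ext.taut (taut_neg_conj_neg φ))
  exact ⟨explosion _, explosion _, explosion⟩
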